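/- arXiv:0905.4900 — 9 statements merged into one kernel-verified Lean document; each statement's English description precedes it below -/
import Mathlib

section
/- The Faulkner map D is surjective onto 𝔤: the linear span of {D(v,w) : v,w ∈ V} equals 𝔤. -/
attribute [local instance 100] LieRing.ofAssociativeRing

/-! If `X` is `B`-orthogonal to every `D v w`, then `⟨X·v, w⟩ = B(D(v,w), X) = 0` for all
`v, w`, so `X` acts by zero on `V` and vanishes by faithfulness. Thus the span of the image of
`D` has zero orthogonal complement, and a subspace of a finite-dimensional space with zero
orthogonal complement for a nondegenerate form is everything. -/

namespace LinearMap.BilinForm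

theorem eq_top_of_orthogonal_eq_bot {K M : Type*} [Field K] [AddCommGroup M] [Module K M]
    [FiniteDimensional K M] {B : LinearMap.BilinForm K M} (hB : B.Nondegenerate) {W : Submodule K M}
    (hW : B.orthogonal W = ⊥) : W = ⊤ := by
  have h := finrank_orthogonal hB W
  rw [hW, finrank_bot] at h
  exact Submodule.eq_top_of_finrank_eq (le_antisymm (Submodule.finrank_le W) (by omega))

end LinearMap.BilinForm

theorem orthogonal_span_transpose_eq_bot {R g V : Type*} [CommRing R]
    [AddCommGroup g] [Module R g] [AddCommGroup V] [Module R V]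
    (B : LinearMap.BilinForm R g) (ρ : g →ₗ[R] Module.End R V) (hρ : Function.Injective ρ)
    (ip : LinearMap.BilinForm R V) (hip : ip.SeparatingLeft) (D : V → V → g)
    (hD : ∀ (v w : V) (X : g), B (D v w) X = ip (ρ X v) w) :
    B.orthogonal (Submodule.span R {X : g | ∃ v w : V, D v w = X}) = ⊥ := by
  refine (Submodule.eq_bot_iff _).mpr fun X hX => ?_
  have hρX : ρ X = 0 := LinearMap.ext fun v => hip _ fun w => by
    rw [← hD]
    exact hX _ (Submodule.subset_span ⟨v, w, rfl⟩)
  exact (map_eq_zero_iff ρ hρ).mp hρX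

theorem faulkner_D_surjective_general
    {g V : Type*} [LieRing g] [LieAlgebra ℝ g]
    [AddCommGroup V] [Module ℝ V]
    [FiniteDimensional ℝ g]
    -- the ad-invariant nondegenerate symmetric bilinear form on 𝔤
    (B : g →ₗ[ℝ] g →ₗ[ℝ] ℝ)
    (hBnondeg : ∀ X : g, (∀ Y : g, B X Y = 0) → X = 0)
    -- the faithful representation of 𝔤 on V
    (ρ : g →ₗ⁅ℝ⁆ Module.End ℝ V)
    (hfaithful : Function.Injective ρ)
    -- the 𝔤-invariant nondegenerate symmetric bilinear form on V
    (ip : V →ₗ[ℝ] V →ₗ[ℝ] ℝ)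
    (hipnondeg : ∀ v : V, (∀ w : V, ip v w = 0) → v = 0)
    -- the Faulkner map D, defined by transposing the 𝔤-action
    (D : V →ₗ[ℝ] V →ₗ[ℝ] g)
    (hD : ∀ (v w : V) (X : g), B (D v w) X = ip (ρ X v) w) :
    Submodule.span ℝ {X : g | ∃ v w : V, D v w = X} = ⊤ :=
  LinearMap.BilinForm.eq_top_of_orthogonal_eq_bot
    (LinearMap.BilinForm.Nondegenerate.ofSeparatingLeft hBnondeg)
    (orthogonal_span_transpose_eq_bot B ρ.toLinearMap hfaithful ip hipnondeg (fun v w => D v w) hD)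

/-- The Faulkner map D is surjective onto 𝔤: the span of its image is all of 𝔤. -/
theorem faulkner_D_surjective
    {g V : Type*} [LieRing g] [LieAlgebra ℝ g]
    [AddCommGroup V] [Module ℝ V]
    [FiniteDimensional ℝ g] [FiniteDimensional ℝ V]
    -- the ad-invariant nondegenerate symmetric bilinear form on 𝔤
    (B : g →ₗ[ℝ] g →ₗ[ℝ] ℝ)
    (hBsymm : ∀ X Y : g, B X Y = B Y X)
    (hBnondeg : ∀ X : g, (∀ Y : g, B X Y = 0) → X = 0)
    (hBinv : ∀ X Y Z : g, B ⁅X, Y⁆ Z + B Y ⁅X, Z⁆ = 0)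
    -- the faithful representation of 𝔤 on V
    (ρ : g →ₗ⁅ℝ⁆ Module.End ℝ V)
    (hfaithful : Function.Injective ρ)
    -- the 𝔤-invariant nondegenerate symmetric bilinear form on V
    (ip : V →ₗ[ℝ] V →ₗ[ℝ] ℝ)
    (hipsymm : ∀ v w : V, ip v w = ip w v)
    (hipnondeg : ∀ v : V, (∀ w : V, ip v w = 0) → v = 0)
    (hipinv : ∀ (X : g) (v w : V), ip (ρ X v) w + ip v (ρ X w) = 0)
    -- the Faulkner map D, defined by transposing the 𝔤-action
    (D : V →ₗ[ℝ] V →ₗ[ℝ] g)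
    (hD : ∀ (v w : V) (X : g), B (D v w) X = ip (ρ X v) w) :
    Submodule.span ℝ {X : g | ∃ v w : V, D v w = X} = ⊤ :=
  faulkner_D_surjective_general B hBnondeg ρ hfaithful ip hipnondeg D hD
end

section
/- The 3-bracket satisfies the orthogonality condition ⟨[x,y,z],w⟩ = −⟨z,[x,y,w]⟩ and the symmetry condition ⟨[x,y,z],w⟩ = ⟨[z,w,x],y⟩ for all x,y,z,w ∈ V. -/
attribute [local instance] LieRing.ofAssociativeRing

theorem faulkner_bracket_orthogonality_symmetry_general
    {g V : Type*} [LieRing g] [LieAlgebra ℝ g]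
    [AddCommGroup V] [Module ℝ V]
    -- the ad-invariant nondegenerate symmetric bilinear form on 𝔤
    (B : g →ₗ[ℝ] g →ₗ[ℝ] ℝ)
    (hBsymm : ∀ X Y : g, B X Y = B Y X)
    -- the faithful representation of 𝔤 on V
    (ρ : g →ₗ⁅ℝ⁆ Module.End ℝ V)
    -- the 𝔤-invariant nondegenerate symmetric bilinear form on V
    (ip : V →ₗ[ℝ] V →ₗ[ℝ] ℝ)
    (hipinv : ∀ (X : g) (v w : V), ip (ρ X v) w + ip v (ρ X w) = 0)
    -- the Faulkner map D, defined by transposing the 𝔤-action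
    (D : V →ₗ[ℝ] V →ₗ[ℝ] g)
    (hD : ∀ (v w : V) (X : g), B (D v w) X = ip (ρ X v) w) :
    ∀ x y z w : V, ip (ρ (D x y) z) w = - ip z (ρ (D x y) w) ∧ ip (ρ (D x y) z) w = ip (ρ (D z w) x) y :=
  fun x y z w =>
    ⟨eq_neg_of_add_eq_zero_left (hipinv (D x y) z w),
      calc ip (ρ (D x y) z) w = B (D z w) (D x y) := (hD z w _).symm
        _ = B (D x y) (D z w) := hBsymm _ _
        _ = ip (ρ (D z w) x) y := hD x y _⟩

/-- The 3-bracket [x,y,z] := D(x,y)·z satisfies the orthogonality condition ⟨[x,y,z],w⟩ = -⟨z,[x,y,w]⟩ and the symmetry condition ⟨[x,y,z],w⟩ = ⟨[z,w,x],y⟩. -/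
theorem faulkner_bracket_orthogonality_symmetry
    {g V : Type*} [LieRing g] [LieAlgebra ℝ g]
    [AddCommGroup V] [Module ℝ V]
    [FiniteDimensional ℝ g] [FiniteDimensional ℝ V]
    -- the ad-invariant nondegenerate symmetric bilinear form on 𝔤
    (B : g →ₗ[ℝ] g →ₗ[ℝ] ℝ)
    (hBsymm : ∀ X Y : g, B X Y = B Y X)
    (hBnondeg : ∀ X : g, (∀ Y : g, B X Y = 0) → X = 0)
    (hBinv : ∀ X Y Z : g, B ⁅X, Y⁆ Z + B Y ⁅X, Z⁆ = 0)
    -- the faithful representation of 𝔤 on V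
    (ρ : g →ₗ⁅ℝ⁆ Module.End ℝ V)
    (hfaithful : Function.Injective ρ)
    -- the 𝔤-invariant nondegenerate symmetric bilinear form on V
    (ip : V →ₗ[ℝ] V →ₗ[ℝ] ℝ)
    (hipsymm : ∀ v w : V, ip v w = ip w v)
    (hipnondeg : ∀ v : V, (∀ w : V, ip v w = 0) → v = 0)
    (hipinv : ∀ (X : g) (v w : V), ip (ρ X v) w + ip v (ρ X w) = 0)
    -- the Faulkner map D, defined by transposing the 𝔤-action
    (D : V →ₗ[ℝ] V →ₗ[ℝ] g)
    (hD : ∀ (v w : V) (X : g), B (D v w) X = ip (ρ X v) w) :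
    ∀ x y z w : V, ip (ρ (D x y) z) w = - ip z (ρ (D x y) w) ∧ ip (ρ (D x y) z) w = ip (ρ (D z w) x) y :=
  faulkner_bracket_orthogonality_symmetry_general B hBsymm ρ ip hipinv D hD
end

section
/- The 3-bracket satisfies the fundamental identity [x,y,[v,w,z]] − [v,w,[x,y,z]] = [[x,y,v],w,z] + [v,[x,y,w],z] for all x,y,v,w,z ∈ V. -/
attribute [local instance 100] LieRing.ofAssociativeRing

/-! Invariance of `B` and of `ip` makes the transpose `D` of the action a `𝔤`-equivariant map
`V × V → 𝔤`. Applying the Lie homomorphism `ρ` to the equivariance identity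
`⁅X, D v w⁆ = D (X • v) w + D v (X • w)` with `X = D x y` gives the fundamental identity. -/

section Faulkner

variable {R g V : Type*} [CommRing R] [LieRing g] [LieAlgebra R g] [AddCommGroup V] [Module R V]
  {B : g →ₗ[R] g →ₗ[R] R} {ρ : g →ₗ⁅R⁆ Module.End R V} {ip : V →ₗ[R] V →ₗ[R] R}
  {D : V →ₗ[R] V →ₗ[R] g}

theorem lie_faulkner_eq_add
    (hBnondeg : ∀ X : g, (∀ Y : g, B X Y = 0) → X = 0)
    (hBinv : ∀ X Y Z : g, B ⁅X, Y⁆ Z + B Y ⁅X, Z⁆ = 0)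
    (hipinv : ∀ (X : g) (v w : V), ip (ρ X v) w + ip v (ρ X w) = 0)
    (hD : ∀ (v w : V) (X : g), B (D v w) X = ip (ρ X v) w) (X : g) (v w : V) :
    ⁅X, D v w⁆ = D (ρ X v) w + D v (ρ X w) := by
  refine sub_eq_zero.mp (hBnondeg _ fun Y => ?_)
  have hB : B ⁅X, D v w⁆ Y = B (D (ρ X v) w + D v (ρ X w)) Y :=
    calc B ⁅X, D v w⁆ Y = -B (D v w) ⁅X, Y⁆ := eq_neg_of_add_eq_zero_left (hBinv X (D v w) Y)
      _ = ip (ρ Y (ρ X v)) w - ip (ρ X (ρ Y v)) w := by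
        rw [hD, LieHom.map_lie, Ring.lie_def, LinearMap.sub_apply, Module.End.mul_apply,
          Module.End.mul_apply, map_sub, LinearMap.sub_apply, neg_sub]
      _ = ip (ρ Y (ρ X v)) w + ip (ρ Y v) (ρ X w) := by
        rw [eq_neg_of_add_eq_zero_right (hipinv X (ρ Y v) w), sub_eq_add_neg]
      _ = B (D (ρ X v) w + D v (ρ X w)) Y := by
        rw [map_add, LinearMap.add_apply, hD, hD]
  rw [map_sub, LinearMap.sub_apply, hB, sub_self]

theorem act_comm_faulkner_eq_add
    (hequiv : ∀ (X : g) (v w : V), ⁅X, D v w⁆ = D (ρ X v) w + D v (ρ X w))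
    (X : g) (v w z : V) :
    ρ X (ρ (D v w) z) - ρ (D v w) (ρ X z) = ρ (D (ρ X v) w) z + ρ (D v (ρ X w)) z := by
  have h := LinearMap.congr_fun (congrArg ρ (hequiv X v w)) z
  rwa [LieHom.map_lie, Ring.lie_def, LinearMap.sub_apply, Module.End.mul_apply,
    Module.End.mul_apply, map_add, LinearMap.add_apply] at h

end Faulkner

theorem faulkner_fundamental_identity_general
    {g V : Type*} [LieRing g] [LieAlgebra ℝ g]
    [AddCommGroup V] [Module ℝ V]
    -- the ad-invariant nondegenerate symmetric bilinear form on 𝔤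
    (B : g →ₗ[ℝ] g →ₗ[ℝ] ℝ)
    (hBnondeg : ∀ X : g, (∀ Y : g, B X Y = 0) → X = 0)
    (hBinv : ∀ X Y Z : g, B ⁅X, Y⁆ Z + B Y ⁅X, Z⁆ = 0)
    -- the faithful representation of 𝔤 on V
    (ρ : g →ₗ⁅ℝ⁆ Module.End ℝ V)
    -- the 𝔤-invariant nondegenerate symmetric bilinear form on V
    (ip : V →ₗ[ℝ] V →ₗ[ℝ] ℝ)
    (hipinv : ∀ (X : g) (v w : V), ip (ρ X v) w + ip v (ρ X w) = 0)
    -- the Faulkner map D, defined by transposing the 𝔤-action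
    (D : V →ₗ[ℝ] V →ₗ[ℝ] g)
    (hD : ∀ (v w : V) (X : g), B (D v w) X = ip (ρ X v) w) :
    ∀ x y v w z : V, ρ (D x y) (ρ (D v w) z) - ρ (D v w) (ρ (D x y) z) = ρ (D (ρ (D x y) v) w) z + ρ (D v (ρ (D x y) w)) z :=
  fun x y => act_comm_faulkner_eq_add (lie_faulkner_eq_add hBnondeg hBinv hipinv hD) (D x y)

/-- The 3-bracket [x,y,z] := D(x,y)·z satisfies the fundamental identity [x,y,[v,w,z]] - [v,w,[x,y,z]] = [[x,y,v],w,z] + [v,[x,y,w],z]. -/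
theorem faulkner_fundamental_identity
    {g V : Type*} [LieRing g] [LieAlgebra ℝ g]
    [AddCommGroup V] [Module ℝ V]
    [FiniteDimensional ℝ g] [FiniteDimensional ℝ V]
    -- the ad-invariant nondegenerate symmetric bilinear form on 𝔤
    (B : g →ₗ[ℝ] g →ₗ[ℝ] ℝ)
    (hBsymm : ∀ X Y : g, B X Y = B Y X)
    (hBnondeg : ∀ X : g, (∀ Y : g, B X Y = 0) → X = 0)
    (hBinv : ∀ X Y Z : g, B ⁅X, Y⁆ Z + B Y ⁅X, Z⁆ = 0)
    -- the faithful representation of 𝔤 on V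
    (ρ : g →ₗ⁅ℝ⁆ Module.End ℝ V)
    (hfaithful : Function.Injective ρ)
    -- the 𝔤-invariant nondegenerate symmetric bilinear form on V
    (ip : V →ₗ[ℝ] V →ₗ[ℝ] ℝ)
    (hipsymm : ∀ v w : V, ip v w = ip w v)
    (hipnondeg : ∀ v : V, (∀ w : V, ip v w = 0) → v = 0)
    (hipinv : ∀ (X : g) (v w : V), ip (ρ X v) w + ip v (ρ X w) = 0)
    -- the Faulkner map D, defined by transposing the 𝔤-action
    (D : V →ₗ[ℝ] V →ₗ[ℝ] g)
    (hD : ∀ (v w : V) (X : g), B (D v w) X = ip (ρ X v) w) :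
    ∀ x y v w z : V, ρ (D x y) (ρ (D v w) z) - ρ (D v w) (ρ (D x y) z) = ρ (D (ρ (D x y) v) w) z + ρ (D v (ρ (D x y) w)) z :=
  faulkner_fundamental_identity_general B hBnondeg hBinv ρ ip hipinv D hD
end

section
/- If W ⊆ V is a 𝔤-submodule and W^⊥ its orthogonal complement, then the Lie triple system V decomposes as the perpendicular direct sum of the ideals W and W^⊥: [x,y,z] ∈ W whenever x,y,z ∈ W, [x,y,z] ∈ W^⊥ whenever x,y,z ∈ W^⊥, and [x,y,z] = 0 whenever at least one of x,y,z lies in W and at least one lies in W^⊥. -/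
/-!
Invariance of `ip` makes `W^⊥` a 𝔤-submodule, and transposing through `B` shows that `D` is
skew-symmetric and that `D(W, W^⊥) = 0`. Positive-definiteness gives `V = W ⊕ W^⊥`. For a triple
`[x, y, z]` with `x ∈ W` and `z ∈ W^⊥`, split `y = a + b` along this decomposition: `D(x, b) = 0`,
and cyclicity rewrites `[x, a, z]` as `-[a, z, x] - [z, x, a]`, whose `D`-factors vanish.
Skew-symmetry of `D` and the symmetry between `W` and `W^⊥` cover the other positions.
-/

attribute [local instance 100] LieRing.ofAssociativeRing

section TripleProduct

variable {R g V : Type*} [CommRing R] [AddCommGroup g] [Module R g] [AddCommGroup V] [Module R V]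
  {ρ : g →ₗ[R] Module.End R V} {D : V →ₗ[R] V →ₗ[R] g}

theorem triple_eq_zero_of_mem_of_mem
    (hcyc : ∀ x y z : V, ρ (D x y) z + ρ (D y z) x + ρ (D z x) y = 0)
    {W U : Submodule R V} (hsup : W ⊔ U = ⊤)
    (hWU : ∀ v ∈ W, ∀ w ∈ U, D v w = 0) (hUW : ∀ v ∈ U, ∀ w ∈ W, D v w = 0)
    {x z : V} (hx : x ∈ W) (hz : z ∈ U) (y : V) : ρ (D x y) z = 0 := by
  obtain ⟨a, ha, b, hb, rfl⟩ := Submodule.mem_sup.mp (hsup ▸ Submodule.mem_top : y ∈ W ⊔ U)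
  have hxa : ρ (D x a) z = 0 := by
    simpa [hWU a ha z hz, hUW z hz x hx] using hcyc x a z
  simp [hxa, hWU x hx b hb]

theorem triple_eq_zero_of_mem_or_mem_of_mem
    (hcyc : ∀ x y z : V, ρ (D x y) z + ρ (D y z) x + ρ (D z x) y = 0)
    (hswap : ∀ v w : V, D w v = -D v w) {W U : Submodule R V} (hsup : W ⊔ U = ⊤)
    (hWU : ∀ v ∈ W, ∀ w ∈ U, D v w = 0) (hUW : ∀ v ∈ U, ∀ w ∈ W, D v w = 0)
    {x y z : V} (hxy : x ∈ W ∨ y ∈ W) (hz : z ∈ U) : ρ (D x y) z = 0 := by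
  rcases hxy with hx | hy
  · exact triple_eq_zero_of_mem_of_mem hcyc hsup hWU hUW hx hz y
  · rw [hswap, map_neg, LinearMap.neg_apply, triple_eq_zero_of_mem_of_mem hcyc hsup hWU hUW hy hz x,
      neg_zero]

theorem triple_eq_zero_of_isCompl
    (hcyc : ∀ x y z : V, ρ (D x y) z + ρ (D y z) x + ρ (D z x) y = 0)
    (hswap : ∀ v w : V, D w v = -D v w) {W U : Submodule R V} (hcompl : IsCompl W U)
    (hWU : ∀ v ∈ W, ∀ w ∈ U, D v w = 0) {x y z : V}
    (hW : x ∈ W ∨ y ∈ W ∨ z ∈ W) (hU : x ∈ U ∨ y ∈ U ∨ z ∈ U) : ρ (D x y) z = 0 := by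
  have hUW : ∀ v ∈ U, ∀ w ∈ W, D v w = 0 := fun v hv w hw => by
    rw [hswap, hWU w hw v hv, neg_zero]
  have hsup := hcompl.sup_eq_top
  have hsup' : U ⊔ W = ⊤ := hcompl.symm.sup_eq_top
  have hzero : ∀ {v}, v ∈ W → v ∈ U → v = 0 := fun hW hU =>
    Submodule.disjoint_def.mp hcompl.disjoint _ hW hU
  rcases hW with hx | hy | hz <;> rcases hU with hx' | hy' | hz'
  · simp [hzero hx hx']
  · simp [hWU x hx y hy']
  · exact triple_eq_zero_of_mem_or_mem_of_mem hcyc hswap hsup hWU hUW (.inl hx) hz'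
  · simp [hUW x hx' y hy]
  · simp [hzero hy hy']
  · exact triple_eq_zero_of_mem_or_mem_of_mem hcyc hswap hsup hWU hUW (.inr hy) hz'
  · exact triple_eq_zero_of_mem_or_mem_of_mem hcyc hswap hsup' hUW hWU (.inl hx') hz
  · exact triple_eq_zero_of_mem_or_mem_of_mem hcyc hswap hsup' hUW hWU (.inr hy') hz
  · simp [hzero hz hz']

end TripleProduct

section Faulkner

variable {R g V : Type*} [CommRing R] [AddCommGroup g] [Module R g] [AddCommGroup V] [Module R V]
  {B : g →ₗ[R] g →ₗ[R] R} {ρ : g →ₗ[R] Module.End R V} {ip : LinearMap.BilinForm R V}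
  {D : V →ₗ[R] V →ₗ[R] g}

theorem faulkner_swap (hBnondeg : ∀ X : g, (∀ Y : g, B X Y = 0) → X = 0)
    (hipsymm : ∀ v w : V, ip v w = ip w v)
    (hipinv : ∀ (X : g) (v w : V), ip (ρ X v) w + ip v (ρ X w) = 0)
    (hD : ∀ (v w : V) (X : g), B (D v w) X = ip (ρ X v) w) (v w : V) : D w v = -D v w := by
  rw [eq_neg_iff_add_eq_zero]
  refine hBnondeg _ fun Y => ?_
  rw [map_add, LinearMap.add_apply, hD, hD, hipsymm (ρ Y w), add_comm, hipinv]

theorem faulkner_eq_zero_of_mem_of_mem_orthogonal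
    (hBnondeg : ∀ X : g, (∀ Y : g, B X Y = 0) → X = 0)
    (hD : ∀ (v w : V) (X : g), B (D v w) X = ip (ρ X v) w)
    {W : Submodule R V} (hW : ∀ (X : g), ∀ w ∈ W, ρ X w ∈ W)
    {v w : V} (hv : v ∈ W) (hw : w ∈ ip.orthogonal W) : D v w = 0 :=
  hBnondeg _ fun Y => by rw [hD]; exact hw _ (hW Y v hv)

theorem rho_mem_orthogonal (hipinv : ∀ (X : g) (v w : V), ip (ρ X v) w + ip v (ρ X w) = 0)
    {W : Submodule R V} (hW : ∀ (X : g), ∀ w ∈ W, ρ X w ∈ W)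
    {z : V} (hz : z ∈ ip.orthogonal W) (X : g) : ρ X z ∈ ip.orthogonal W := fun u hu => by
  have h := hipinv X u z
  rwa [hz _ (hW X u hu), zero_add] at h

end Faulkner

theorem LinearMap.BilinForm.isCompl_orthogonal_of_anisotropic {K V : Type*} [Field K]
    [AddCommGroup V] [Module K V] [FiniteDimensional K V] {ip : LinearMap.BilinForm K V}
    (hipsymm : ∀ v w : V, ip v w = ip w v) (hanis : ∀ v : V, ip v v = 0 → v = 0)
    (W : Submodule K V) : IsCompl W (ip.orthogonal W) := by
  refine (ip.isCompl_orthogonal_iff_disjoint fun v w h => by rwa [hipsymm]).mpr ?_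
  exact Submodule.disjoint_def.mpr fun v hv hv' => hanis v (hv' v hv)

theorem lts_decomposes_along_submodule_general
    {g V : Type*} [LieRing g] [LieAlgebra ℝ g]
    [AddCommGroup V] [Module ℝ V]
    [FiniteDimensional ℝ V]
    -- the ad-invariant nondegenerate symmetric bilinear form on 𝔤
    (B : g →ₗ[ℝ] g →ₗ[ℝ] ℝ)
    (hBnondeg : ∀ X : g, (∀ Y : g, B X Y = 0) → X = 0)
    -- the faithful representation of 𝔤 on V
    (ρ : g →ₗ⁅ℝ⁆ Module.End ℝ V)
    -- the 𝔤-invariant positive-definite symmetric bilinear form on V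
    (ip : V →ₗ[ℝ] V →ₗ[ℝ] ℝ)
    (hipsymm : ∀ v w : V, ip v w = ip w v)
    (hippos : ∀ v : V, v ≠ 0 → 0 < ip v v)
    (hipinv : ∀ (X : g) (v w : V), ip (ρ X v) w + ip v (ρ X w) = 0)
    -- the Faulkner map D, defined by transposing the 𝔤-action
    (D : V →ₗ[ℝ] V →ₗ[ℝ] g)
    (hD : ∀ (v w : V) (X : g), B (D v w) X = ip (ρ X v) w)
    -- cyclicity: [x,y,z] + [y,z,x] + [z,x,y] = 0 (Lie triple system condition)
    (hcyc : ∀ x y z : V, ρ (D x y) z + ρ (D y z) x + ρ (D z x) y = 0) :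
    ∀ W : Submodule ℝ V, (∀ (X : g), ∀ w ∈ W, ρ X w ∈ W) →
      -- [x,y,z] ∈ W whenever x,y,z ∈ W
      (∀ x y z : V, x ∈ W → y ∈ W → z ∈ W → ρ (D x y) z ∈ W) ∧
      -- [x,y,z] ∈ W^⊥ whenever x,y,z ∈ W^⊥
      (∀ x y z : V, (∀ u ∈ W, ip u x = 0) → (∀ u ∈ W, ip u y = 0) →
        (∀ u ∈ W, ip u z = 0) → ∀ u ∈ W, ip u (ρ (D x y) z) = 0) ∧
      -- [x,y,z] = 0 whenever at least one of x,y,z lies in W and at least one in W^⊥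
      (∀ x y z : V, (x ∈ W ∨ y ∈ W ∨ z ∈ W) →
        ((∀ u ∈ W, ip u x = 0) ∨ (∀ u ∈ W, ip u y = 0) ∨ (∀ u ∈ W, ip u z = 0)) →
        ρ (D x y) z = 0) := by
  intro W hW
  have hanis : ∀ v : V, ip v v = 0 → v = 0 := fun v hv => by_contra fun h => (hippos v h).ne' hv
  refine ⟨fun x y z _ _ hz => hW _ z hz, fun x y z _ _ hz => rho_mem_orthogonal hipinv hW hz _,
    fun x y z hxyzW hxyzW' => ?_⟩
  exact triple_eq_zero_of_isCompl hcyc (faulkner_swap hBnondeg hipsymm hipinv hD)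
    (LinearMap.BilinForm.isCompl_orthogonal_of_anisotropic hipsymm hanis W)
    (fun v hv w hw => faulkner_eq_zero_of_mem_of_mem_orthogonal hBnondeg hD hW hv hw) hxyzW hxyzW'

/-- A 𝔤-submodule W and its orthogonal complement W^⊥ decompose the positive-definite Lie triple system V into a perpendicular direct sum of ideals. -/
theorem lts_decomposes_along_submodule
    {g V : Type*} [LieRing g] [LieAlgebra ℝ g]
    [AddCommGroup V] [Module ℝ V]
    [FiniteDimensional ℝ g] [FiniteDimensional ℝ V]
    -- the ad-invariant nondegenerate symmetric bilinear form on 𝔤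
    (B : g →ₗ[ℝ] g →ₗ[ℝ] ℝ)
    (hBsymm : ∀ X Y : g, B X Y = B Y X)
    (hBnondeg : ∀ X : g, (∀ Y : g, B X Y = 0) → X = 0)
    (hBinv : ∀ X Y Z : g, B ⁅X, Y⁆ Z + B Y ⁅X, Z⁆ = 0)
    -- the faithful representation of 𝔤 on V
    (ρ : g →ₗ⁅ℝ⁆ Module.End ℝ V)
    (hfaithful : Function.Injective ρ)
    -- the 𝔤-invariant positive-definite symmetric bilinear form on V
    (ip : V →ₗ[ℝ] V →ₗ[ℝ] ℝ)
    (hipsymm : ∀ v w : V, ip v w = ip w v)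
    (hippos : ∀ v : V, v ≠ 0 → 0 < ip v v)
    (hipinv : ∀ (X : g) (v w : V), ip (ρ X v) w + ip v (ρ X w) = 0)
    -- the Faulkner map D, defined by transposing the 𝔤-action
    (D : V →ₗ[ℝ] V →ₗ[ℝ] g)
    (hD : ∀ (v w : V) (X : g), B (D v w) X = ip (ρ X v) w)
    -- cyclicity: [x,y,z] + [y,z,x] + [z,x,y] = 0 (Lie triple system condition)
    (hcyc : ∀ x y z : V, ρ (D x y) z + ρ (D y z) x + ρ (D z x) y = 0) :
    ∀ W : Submodule ℝ V, (∀ (X : g), ∀ w ∈ W, ρ X w ∈ W) →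
      -- [x,y,z] ∈ W whenever x,y,z ∈ W
      (∀ x y z : V, x ∈ W → y ∈ W → z ∈ W → ρ (D x y) z ∈ W) ∧
      -- [x,y,z] ∈ W^⊥ whenever x,y,z ∈ W^⊥
      (∀ x y z : V, (∀ u ∈ W, ip u x = 0) → (∀ u ∈ W, ip u y = 0) →
        (∀ u ∈ W, ip u z = 0) → ∀ u ∈ W, ip u (ρ (D x y) z) = 0) ∧
      -- [x,y,z] = 0 whenever at least one of x,y,z lies in W and at least one in W^⊥
      (∀ x y z : V, (x ∈ W ∨ y ∈ W ∨ z ∈ W) →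
        ((∀ u ∈ W, ip u x = 0) ∨ (∀ u ∈ W, ip u y = 0) ∨ (∀ u ∈ W, ip u z = 0)) →
        ρ (D x y) z = 0) :=
  lts_decomposes_along_submodule_general B hBnondeg ρ ip hipsymm hippos hipinv D hD hcyc
end

section
/- If W ⊆ V is a 𝔤-submodule with 0 ≠ W ≠ V, then I := span{D(w,w′) : w,w′ ∈ W} ⊕ W is a Lie ideal of the Lie algebra 𝔨 = 𝔤 ⊕ V which is homogeneous (I = (I ∩ 𝔤) ⊕ (I ∩ V)) and proper (I ≠ 0 and I ≠ 𝔨). (This is the contrapositive of the implication (3)⟹(1) of Theorem 3.1.) -/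
variable {g V : Type*} [LieRing g] [LieAlgebra ℝ g] [AddCommGroup V] [Module ℝ V]

attribute [local instance 100] LieRing.ofAssociativeRing

/-- The bracket on the embedding Lie algebra 𝔨 = 𝔤 ⊕ V:
`[(X,v),(Y,w)] = ([X,Y] + D(v,w), X·w - Y·v)`. -/
def kBracket (ρ : g →ₗ⁅ℝ⁆ Module.End ℝ V) (D : V →ₗ[ℝ] V →ₗ[ℝ] g)
    (p q : g × V) : g × V :=
  (⁅p.1, q.1⁆ + D p.2 q.2, ρ p.1 q.2 - ρ q.1 p.2)

/-! The cyclicity identity D(w,w')·v = -(D(w',v)·w + D(v,w)·w') shows that span D(W,W) maps V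
into W, and the 𝔤-equivariance of D (a consequence of the invariance of B and ⟨−,−⟩) makes
span D(W,W) an ideal of 𝔤. The remaining bracket D(v,w) with w ∈ W is handled by splitting
V = W ⊕ W^⊥, which positivity of ⟨−,−⟩ provides: invariance of W gives D(W^⊥, W) = 0.
Properness of I is inherited from that of W. -/

theorem LinearMap.BilinForm.isCompl_orthogonal_of_pos {K E : Type*} [Field K] [LinearOrder K]
    [IsStrictOrderedRing K] [AddCommGroup E] [Module K E] [FiniteDimensional K E]
    {β : LinearMap.BilinForm K E} (hsymm : ∀ v w : E, β v w = β w v)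
    (hpos : ∀ v : E, v ≠ 0 → 0 < β v v) (W : Submodule K E) :
    IsCompl W (β.orthogonal W) := by
  refine (β.isCompl_orthogonal_iff_disjoint fun v w h => (hsymm w v).trans h).mpr ?_
  rw [Submodule.disjoint_def]
  intro v hv hv'
  by_contra hne
  exact (hpos v hne).ne' (hv' v hv)

def faulknerSpan (D : V →ₗ[ℝ] V →ₗ[ℝ] g) (W : Submodule ℝ V) : Submodule ℝ g :=
  Submodule.span ℝ {X : g | ∃ w ∈ W, ∃ w' ∈ W, D w w' = X}

section

variable {ρ : g →ₗ⁅ℝ⁆ Module.End ℝ V} {D : V →ₗ[ℝ] V →ₗ[ℝ] g} {W : Submodule ℝ V}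

theorem apply_mem_faulknerSpan {w w' : V} (hw : w ∈ W) (hw' : w' ∈ W) :
    D w w' ∈ faulknerSpan D W :=
  Submodule.subset_span ⟨w, hw, w', hw', rfl⟩

theorem apply_mem_of_mem_faulknerSpan
    (hcyc : ∀ x y z : V, ρ (D x y) z + ρ (D y z) x + ρ (D z x) y = 0)
    (hWmod : ∀ (X : g), ∀ w ∈ W, ρ X w ∈ W) {Y : g} (hY : Y ∈ faulknerSpan D W) (v : V) :
    ρ Y v ∈ W := by
  induction hY using Submodule.span_induction with
  | mem X hX =>
    obtain ⟨w, hw, w', hw', rfl⟩ := hX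
    have hcyc' : ρ (D w w') v = -(ρ (D w' v) w + ρ (D v w) w') := by
      rw [eq_neg_iff_add_eq_zero, ← add_assoc]
      exact hcyc w w' v
    rw [hcyc']
    exact neg_mem (add_mem (hWmod _ _ hw) (hWmod _ _ hw'))
  | zero => simp
  | add X Y _ _ hX hY => simpa using add_mem hX hY
  | smul c X _ hX => simpa using W.smul_mem c hX

theorem lie_apply_eq_add {B : g →ₗ[ℝ] g →ₗ[ℝ] ℝ}
    (hBnondeg : ∀ X : g, (∀ Y : g, B X Y = 0) → X = 0)
    (hBinv : ∀ X Y Z : g, B ⁅X, Y⁆ Z + B Y ⁅X, Z⁆ = 0) {ip : V →ₗ[ℝ] V →ₗ[ℝ] ℝ}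
    (hipinv : ∀ (X : g) (v w : V), ip (ρ X v) w + ip v (ρ X w) = 0)
    (hD : ∀ (v w : V) (X : g), B (D v w) X = ip (ρ X v) w) (X : g) (v w : V) :
    ⁅X, D v w⁆ = D (ρ X v) w + D v (ρ X w) := by
  rw [← sub_eq_zero]
  refine hBnondeg _ fun Z => ?_
  have hρ : ρ ⁅X, Z⁆ v = ρ X (ρ Z v) - ρ Z (ρ X v) := by rw [LieHom.map_lie]; rfl
  calc B (⁅X, D v w⁆ - (D (ρ X v) w + D v (ρ X w))) Z
      = -B (D v w) ⁅X, Z⁆ - B (D (ρ X v) w) Z - B (D v (ρ X w)) Z := by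
        simp only [map_sub, map_add, LinearMap.sub_apply, LinearMap.add_apply]
        linear_combination hBinv X (D v w) Z
    _ = -ip (ρ X (ρ Z v)) w - ip (ρ Z v) (ρ X w) := by
        rw [hD, hD, hD, hρ]
        simp only [map_sub, LinearMap.sub_apply]
        ring
    _ = 0 := by linear_combination -hipinv X (ρ Z v) w

theorem lie_mem_faulknerSpan
    (hequiv : ∀ (X : g) (v w : V), ⁅X, D v w⁆ = D (ρ X v) w + D v (ρ X w))
    (hWmod : ∀ (X : g), ∀ w ∈ W, ρ X w ∈ W) (X : g) {Y : g} (hY : Y ∈ faulknerSpan D W) :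
    ⁅X, Y⁆ ∈ faulknerSpan D W := by
  induction hY using Submodule.span_induction with
  | mem Z hZ =>
    obtain ⟨w, hw, w', hw', rfl⟩ := hZ
    rw [hequiv]
    exact add_mem (apply_mem_faulknerSpan (hWmod _ _ hw) hw')
      (apply_mem_faulknerSpan hw (hWmod _ _ hw'))
  | zero => simp
  | add Y Z _ _ hY hZ => rw [lie_add]; exact add_mem hY hZ
  | smul c Y _ hY => rw [lie_smul]; exact Submodule.smul_mem _ c hY

theorem apply_eq_zero_of_mem_orthogonal {B : g →ₗ[ℝ] g →ₗ[ℝ] ℝ}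
    (hBnondeg : ∀ X : g, (∀ Y : g, B X Y = 0) → X = 0) {ip : V →ₗ[ℝ] V →ₗ[ℝ] ℝ}
    (hipsymm : ∀ v w : V, ip v w = ip w v)
    (hipinv : ∀ (X : g) (v w : V), ip (ρ X v) w + ip v (ρ X w) = 0)
    (hD : ∀ (v w : V) (X : g), B (D v w) X = ip (ρ X v) w)
    (hWmod : ∀ (X : g), ∀ w ∈ W, ρ X w ∈ W) {v w : V}
    (hv : v ∈ LinearMap.BilinForm.orthogonal ip W) (hw : w ∈ W) :
    D v w = 0 := by
  refine hBnondeg _ fun Z => ?_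
  have hvZw : ip (ρ Z w) v = 0 := hv _ (hWmod Z w hw)
  rw [hD]
  linear_combination hipinv Z v w - hipsymm v (ρ Z w) - hvZw

theorem apply_mem_faulknerSpan_of_right_mem [FiniteDimensional ℝ V] {B : g →ₗ[ℝ] g →ₗ[ℝ] ℝ}
    (hBnondeg : ∀ X : g, (∀ Y : g, B X Y = 0) → X = 0) {ip : V →ₗ[ℝ] V →ₗ[ℝ] ℝ}
    (hipsymm : ∀ v w : V, ip v w = ip w v) (hippos : ∀ v : V, v ≠ 0 → 0 < ip v v)
    (hipinv : ∀ (X : g) (v w : V), ip (ρ X v) w + ip v (ρ X w) = 0)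
    (hD : ∀ (v w : V) (X : g), B (D v w) X = ip (ρ X v) w)
    (hWmod : ∀ (X : g), ∀ w ∈ W, ρ X w ∈ W) (v : V) {w : V} (hw : w ∈ W) :
    D v w ∈ faulknerSpan D W := by
  have hv : v ∈ W ⊔ LinearMap.BilinForm.orthogonal ip W := by
    rw [(LinearMap.BilinForm.isCompl_orthogonal_of_pos hipsymm hippos W).sup_eq_top]
    trivial
  obtain ⟨a, ha, b, hb, rfl⟩ := Submodule.mem_sup.mp hv
  rw [map_add, LinearMap.add_apply,
    apply_eq_zero_of_mem_orthogonal hBnondeg hipsymm hipinv hD hWmod hb hw, add_zero]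
  exact apply_mem_faulknerSpan ha hw

end

theorem lts_proper_submodule_gives_proper_homogeneous_ideal_general
    [FiniteDimensional ℝ V]
    -- the ad-invariant nondegenerate symmetric bilinear form on 𝔤
    (B : g →ₗ[ℝ] g →ₗ[ℝ] ℝ)
    (hBnondeg : ∀ X : g, (∀ Y : g, B X Y = 0) → X = 0)
    (hBinv : ∀ X Y Z : g, B ⁅X, Y⁆ Z + B Y ⁅X, Z⁆ = 0)
    -- the faithful representation of 𝔤 on V
    (ρ : g →ₗ⁅ℝ⁆ Module.End ℝ V)
    -- the 𝔤-invariant positive-definite symmetric bilinear form on V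
    (ip : V →ₗ[ℝ] V →ₗ[ℝ] ℝ)
    (hipsymm : ∀ v w : V, ip v w = ip w v)
    (hippos : ∀ v : V, v ≠ 0 → 0 < ip v v)
    (hipinv : ∀ (X : g) (v w : V), ip (ρ X v) w + ip v (ρ X w) = 0)
    -- the Faulkner map D, defined by transposing the 𝔤-action
    (D : V →ₗ[ℝ] V →ₗ[ℝ] g)
    (hD : ∀ (v w : V) (X : g), B (D v w) X = ip (ρ X v) w)
    -- cyclicity: [x,y,z] + [y,z,x] + [z,x,y] = 0 (Lie triple system condition)
    (hcyc : ∀ x y z : V, ρ (D x y) z + ρ (D y z) x + ρ (D z x) y = 0)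
    -- W is a proper nonzero 𝔤-submodule of V
    (W : Submodule ℝ V)
    (hWmod : ∀ (X : g), ∀ w ∈ W, ρ X w ∈ W)
    (hWne_bot : W ≠ ⊥) (hWne_top : W ≠ ⊤) :
    -- I = span{D(w,w') : w,w' ∈ W} ⊕ W
      (∀ a : g × V, ∀ b ∈ (Submodule.span ℝ {X : g | ∃ w ∈ W, ∃ w' ∈ W, D w w' = X}).prod W,
        kBracket ρ D a b ∈ (Submodule.span ℝ {X : g | ∃ w ∈ W, ∃ w' ∈ W, D w w' = X}).prod W) ∧
      (∀ p ∈ (Submodule.span ℝ {X : g | ∃ w ∈ W, ∃ w' ∈ W, D w w' = X}).prod W,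
        (p.1, (0 : V)) ∈ (Submodule.span ℝ {X : g | ∃ w ∈ W, ∃ w' ∈ W, D w w' = X}).prod W ∧
        ((0 : g), p.2) ∈ (Submodule.span ℝ {X : g | ∃ w ∈ W, ∃ w' ∈ W, D w w' = X}).prod W) ∧
      (Submodule.span ℝ {X : g | ∃ w ∈ W, ∃ w' ∈ W, D w w' = X}).prod W ≠ ⊥ ∧
      (Submodule.span ℝ {X : g | ∃ w ∈ W, ∃ w' ∈ W, D w w' = X}).prod W ≠ ⊤ := by
  have hequiv := lie_apply_eq_add hBnondeg hBinv hipinv hD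
  refine ⟨?_, fun p hp => ⟨⟨hp.1, W.zero_mem⟩, ⟨zero_mem _, hp.2⟩⟩, ?_, ?_⟩
  · rintro a b ⟨hb₁, hb₂⟩
    exact ⟨add_mem (lie_mem_faulknerSpan hequiv hWmod a.1 hb₁)
        (apply_mem_faulknerSpan_of_right_mem hBnondeg hipsymm hippos hipinv hD hWmod a.2 hb₂),
      sub_mem (hWmod a.1 b.2 hb₂) (apply_mem_of_mem_faulknerSpan hcyc hWmod hb₁ a.2)⟩
  · rw [Ne, Submodule.prod_eq_bot_iff]
    exact fun h => hWne_bot h.2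
  · rw [Ne, Submodule.prod_eq_top_iff]
    exact fun h => hWne_top h.2

/-- If W is a proper nonzero 𝔤-submodule of V, then I = span{D(w,w') : w,w' ∈ W} ⊕ W is a homogeneous proper Lie ideal of 𝔨 = 𝔤 ⊕ V.  (Contrapositive of (3) ⟹ (1) of Theorem 3.1.) -/
theorem lts_proper_submodule_gives_proper_homogeneous_ideal
    [FiniteDimensional ℝ g] [FiniteDimensional ℝ V]
    -- the ad-invariant nondegenerate symmetric bilinear form on 𝔤
    (B : g →ₗ[ℝ] g →ₗ[ℝ] ℝ)
    (hBsymm : ∀ X Y : g, B X Y = B Y X)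
    (hBnondeg : ∀ X : g, (∀ Y : g, B X Y = 0) → X = 0)
    (hBinv : ∀ X Y Z : g, B ⁅X, Y⁆ Z + B Y ⁅X, Z⁆ = 0)
    -- the faithful representation of 𝔤 on V
    (ρ : g →ₗ⁅ℝ⁆ Module.End ℝ V)
    (hfaithful : Function.Injective ρ)
    -- the 𝔤-invariant positive-definite symmetric bilinear form on V
    (ip : V →ₗ[ℝ] V →ₗ[ℝ] ℝ)
    (hipsymm : ∀ v w : V, ip v w = ip w v)
    (hippos : ∀ v : V, v ≠ 0 → 0 < ip v v)
    (hipinv : ∀ (X : g) (v w : V), ip (ρ X v) w + ip v (ρ X w) = 0)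
    -- the Faulkner map D, defined by transposing the 𝔤-action
    (D : V →ₗ[ℝ] V →ₗ[ℝ] g)
    (hD : ∀ (v w : V) (X : g), B (D v w) X = ip (ρ X v) w)
    -- cyclicity: [x,y,z] + [y,z,x] + [z,x,y] = 0 (Lie triple system condition)
    (hcyc : ∀ x y z : V, ρ (D x y) z + ρ (D y z) x + ρ (D z x) y = 0)
    -- W is a proper nonzero 𝔤-submodule of V
    (W : Submodule ℝ V)
    (hWmod : ∀ (X : g), ∀ w ∈ W, ρ X w ∈ W)
    (hWne_bot : W ≠ ⊥) (hWne_top : W ≠ ⊤) :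
    -- I = span{D(w,w') : w,w' ∈ W} ⊕ W
      (∀ a : g × V, ∀ b ∈ (Submodule.span ℝ {X : g | ∃ w ∈ W, ∃ w' ∈ W, D w w' = X}).prod W,
        kBracket ρ D a b ∈ (Submodule.span ℝ {X : g | ∃ w ∈ W, ∃ w' ∈ W, D w w' = X}).prod W) ∧
      (∀ p ∈ (Submodule.span ℝ {X : g | ∃ w ∈ W, ∃ w' ∈ W, D w w' = X}).prod W,
        (p.1, (0 : V)) ∈ (Submodule.span ℝ {X : g | ∃ w ∈ W, ∃ w' ∈ W, D w w' = X}).prod W ∧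
        ((0 : g), p.2) ∈ (Submodule.span ℝ {X : g | ∃ w ∈ W, ∃ w' ∈ W, D w w' = X}).prod W) ∧
      (Submodule.span ℝ {X : g | ∃ w ∈ W, ∃ w' ∈ W, D w w' = X}).prod W ≠ ⊥ ∧
      (Submodule.span ℝ {X : g | ∃ w ∈ W, ∃ w' ∈ W, D w w' = X}).prod W ≠ ⊤ :=
  lts_proper_submodule_gives_proper_homogeneous_ideal_general B hBnondeg hBinv ρ ip hipsymm hippos
    hipinv D hD hcyc W hWmod hWne_bot hWne_top
end

section
/- Assume V is irreducible as a 𝔤-module. Then every homogeneous Lie ideal of 𝔨 = 𝔤 ⊕ V, i.e. every Lie ideal of the form I₀ ⊕ I₁ with I₀ ⊆ 𝔤 and I₁ ⊆ V, is either 0 or all of 𝔨. (This is the implication (1)⟹(3) of Theorem 3.1.) -/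
variable {g V : Type*} [LieRing g] [LieAlgebra ℝ g] [AddCommGroup V] [Module ℝ V]

attribute [local instance 100] LieRing.ofAssociativeRing

/-!
The `V`-part `I ∩ V` of a homogeneous ideal `I` is a `𝔤`-submodule, hence `0` or `V`.
If it is `0`, then `[v, X] = -X·v` lies in it for every `X ∈ I ∩ 𝔤`, so `X` acts trivially and
vanishes by faithfulness. If it is `V`, then `I ∩ 𝔤` contains every `D(v,w) = [v,w]`; an `X` with
`B(I ∩ 𝔤, X) = 0` then satisfies `⟨X·v, X·v⟩ = B(D(v, X·v), X) = 0` for all `v`, so `X = 0`, and a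
dimension count gives `I ∩ 𝔤 = 𝔤`.
-/

theorem Submodule.eq_top_of_separatingRight_domRestrict {K M : Type*} [Field K] [AddCommGroup M]
    [Module K M] [FiniteDimensional K M] {B : M →ₗ[K] M →ₗ[K] K} {W : Submodule K M}
    (hW : (B.domRestrict W).SeparatingRight) : W = ⊤ := by
  have hinj : Function.Injective (B.domRestrict W).flip := by
    rw [← LinearMap.ker_eq_bot, ← LinearMap.separatingRight_iff_flip_ker_eq_bot]
    exact hW
  refine Submodule.eq_top_of_finrank_eq (le_antisymm W.finrank_le ?_)
  calc Module.finrank K M ≤ Module.finrank K (Module.Dual K W) :=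
        LinearMap.finrank_le_finrank_of_injective hinj
    _ = Module.finrank K W := Subspace.dual_finrank_eq

theorem Submodule.eq_top_of_comap_inl_eq_top_of_comap_inr_eq_top {R M N : Type*} [Semiring R]
    [AddCommMonoid M] [Module R M] [AddCommMonoid N] [Module R N] {I : Submodule R (M × N)}
    (hM : I.comap (LinearMap.inl R M N) = ⊤) (hN : I.comap (LinearMap.inr R M N) = ⊤) :
    I = ⊤ := by
  refine eq_top_iff'.2 fun p ↦ ?_
  have h₁ : p.1 ∈ I.comap (LinearMap.inl R M N) := hM ▸ trivial
  have h₂ : p.2 ∈ I.comap (LinearMap.inr R M N) := hN ▸ trivial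
  simpa using I.add_mem h₁ h₂

theorem Submodule.eq_bot_of_comap_inl_eq_bot_of_comap_inr_eq_bot {R M N : Type*} [Semiring R]
    [AddCommMonoid M] [Module R M] [AddCommMonoid N] [Module R N] {I : Submodule R (M × N)}
    (hI : ∀ p ∈ I, (p.1, (0 : N)) ∈ I ∧ ((0 : M), p.2) ∈ I)
    (hM : I.comap (LinearMap.inl R M N) = ⊥) (hN : I.comap (LinearMap.inr R M N) = ⊥) :
    I = ⊥ := by
  refine (Submodule.eq_bot_iff I).2 fun p hp ↦ Prod.ext ?_ ?_
  · have h₁ : p.1 ∈ I.comap (LinearMap.inl R M N) := (hI p hp).1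
    simpa [hM] using h₁
  · have h₂ : p.2 ∈ I.comap (LinearMap.inr R M N) := (hI p hp).2
    simpa [hN] using h₂

theorem eq_top_of_forall_faulkner_mem [FiniteDimensional ℝ g] {B : g →ₗ[ℝ] g →ₗ[ℝ] ℝ}
    {ρ : g →ₗ[ℝ] Module.End ℝ V} (hρ : Function.Injective ρ) {ip : V →ₗ[ℝ] V →ₗ[ℝ] ℝ}
    (hip : ∀ v : V, v ≠ 0 → 0 < ip v v) {D : V →ₗ[ℝ] V →ₗ[ℝ] g}
    (hD : ∀ (v w : V) (X : g), B (D v w) X = ip (ρ X v) w) {W : Submodule ℝ g}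
    (hW : ∀ v w : V, D v w ∈ W) : W = ⊤ := by
  refine Submodule.eq_top_of_separatingRight_domRestrict (B := B) fun X hX ↦ ?_
  refine (injective_iff_map_eq_zero ρ).1 hρ X (LinearMap.ext fun v ↦ ?_)
  by_contra hne
  have hzero : B (D v (ρ X v)) X = 0 := hX ⟨_, hW v (ρ X v)⟩
  exact (hip _ hne).ne' (hD v (ρ X v) X ▸ hzero)

section kBracket

variable (ρ : g →ₗ⁅ℝ⁆ Module.End ℝ V) (D : V →ₗ[ℝ] V →ₗ[ℝ] g)

@[simp]
theorem kBracket_inl_inr (X : g) (v : V) : kBracket ρ D (X, 0) (0, v) = (0, ρ X v) := by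
  simp [kBracket]

@[simp]
theorem kBracket_inr_inl (v : V) (X : g) : kBracket ρ D (0, v) (X, 0) = (0, -ρ X v) := by
  simp [kBracket]

@[simp]
theorem kBracket_inr_inr (v w : V) : kBracket ρ D (0, v) (0, w) = (D v w, 0) := by
  simp [kBracket]

variable {ρ D} {I : Submodule ℝ (g × V)} (hI : ∀ a : g × V, ∀ b ∈ I, kBracket ρ D a b ∈ I)
include hI

theorem act_mem_comap_inr {u : V} (hu : u ∈ I.comap (LinearMap.inr ℝ g V)) (X : g) :
    ρ X u ∈ I.comap (LinearMap.inr ℝ g V) := by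
  simpa using hI (X, 0) _ hu

theorem comap_inl_eq_bot_of_comap_inr_eq_bot (hρ : Function.Injective ρ)
    (hV : I.comap (LinearMap.inr ℝ g V) = ⊥) : I.comap (LinearMap.inl ℝ g V) = ⊥ := by
  refine (Submodule.eq_bot_iff _).2 fun X hX ↦ ?_
  refine (injective_iff_map_eq_zero ρ).1 hρ X (LinearMap.ext fun v ↦ ?_)
  have hmem : -ρ X v ∈ I.comap (LinearMap.inr ℝ g V) := by
    rw [Submodule.mem_comap, LinearMap.inr_apply, ← kBracket_inr_inl]
    exact hI _ _ hX
  simpa [hV] using hmem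

theorem faulkner_mem_comap_inl (hV : I.comap (LinearMap.inr ℝ g V) = ⊤) (v w : V) :
    D v w ∈ I.comap (LinearMap.inl ℝ g V) := by
  have hw : w ∈ I.comap (LinearMap.inr ℝ g V) := hV ▸ trivial
  simpa using hI (0, v) _ hw

end kBracket

theorem lts_irreducible_implies_graded_simple_general
    [FiniteDimensional ℝ g]
    -- the ad-invariant nondegenerate symmetric bilinear form on 𝔤
    (B : g →ₗ[ℝ] g →ₗ[ℝ] ℝ)
    -- the faithful representation of 𝔤 on V
    (ρ : g →ₗ⁅ℝ⁆ Module.End ℝ V)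
    (hfaithful : Function.Injective ρ)
    -- the 𝔤-invariant positive-definite symmetric bilinear form on V
    (ip : V →ₗ[ℝ] V →ₗ[ℝ] ℝ)
    (hippos : ∀ v : V, v ≠ 0 → 0 < ip v v)
    -- the Faulkner map D, defined by transposing the 𝔤-action
    (D : V →ₗ[ℝ] V →ₗ[ℝ] g)
    (hD : ∀ (v w : V) (X : g), B (D v w) X = ip (ρ X v) w)
    -- V is irreducible as a 𝔤-module
    (hirr : ∀ U : Submodule ℝ V, (∀ (X : g), ∀ u ∈ U, ρ X u ∈ U) → U = ⊥ ∨ U = ⊤) :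
    ∀ I : Submodule ℝ (g × V),
      -- I is homogeneous: I = (I ∩ 𝔤) ⊕ (I ∩ V)
      (∀ p ∈ I, (p.1, (0 : V)) ∈ I ∧ ((0 : g), p.2) ∈ I) →
      -- I is a Lie ideal of 𝔨
      (∀ a : g × V, ∀ b ∈ I, kBracket ρ D a b ∈ I) →
      I = ⊥ ∨ I = ⊤ := by
  intro I hhom hideal
  rcases hirr _ fun X u hu ↦ act_mem_comap_inr hideal hu X with hV | hV
  · exact .inl <| Submodule.eq_bot_of_comap_inl_eq_bot_of_comap_inr_eq_bot hhom
      (comap_inl_eq_bot_of_comap_inr_eq_bot hideal hfaithful hV) hV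
  · have hg : I.comap (LinearMap.inl ℝ g V) = ⊤ :=
      eq_top_of_forall_faulkner_mem (ρ := ρ.toLinearMap) hfaithful hippos hD
        (faulkner_mem_comap_inl hideal hV)
    exact .inr <| Submodule.eq_top_of_comap_inl_eq_top_of_comap_inr_eq_top hg hV

/-- If V is irreducible as a 𝔤-module, then every homogeneous Lie ideal of 𝔨 = 𝔤 ⊕ V is 0 or all of 𝔨.  (Implication (1) ⟹ (3) of Theorem 3.1.) -/
theorem lts_irreducible_implies_graded_simple
    [FiniteDimensional ℝ g] [FiniteDimensional ℝ V]
    -- the ad-invariant nondegenerate symmetric bilinear form on 𝔤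
    (B : g →ₗ[ℝ] g →ₗ[ℝ] ℝ)
    (hBsymm : ∀ X Y : g, B X Y = B Y X)
    (hBnondeg : ∀ X : g, (∀ Y : g, B X Y = 0) → X = 0)
    (hBinv : ∀ X Y Z : g, B ⁅X, Y⁆ Z + B Y ⁅X, Z⁆ = 0)
    -- the faithful representation of 𝔤 on V
    (ρ : g →ₗ⁅ℝ⁆ Module.End ℝ V)
    (hfaithful : Function.Injective ρ)
    -- the 𝔤-invariant positive-definite symmetric bilinear form on V
    (ip : V →ₗ[ℝ] V →ₗ[ℝ] ℝ)
    (hipsymm : ∀ v w : V, ip v w = ip w v)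
    (hippos : ∀ v : V, v ≠ 0 → 0 < ip v v)
    (hipinv : ∀ (X : g) (v w : V), ip (ρ X v) w + ip v (ρ X w) = 0)
    -- the Faulkner map D, defined by transposing the 𝔤-action
    (D : V →ₗ[ℝ] V →ₗ[ℝ] g)
    (hD : ∀ (v w : V) (X : g), B (D v w) X = ip (ρ X v) w)
    -- cyclicity: [x,y,z] + [y,z,x] + [z,x,y] = 0 (Lie triple system condition)
    (hcyc : ∀ x y z : V, ρ (D x y) z + ρ (D y z) x + ρ (D z x) y = 0)
    -- V is irreducible as a 𝔤-module
    (hirr : ∀ U : Submodule ℝ V, (∀ (X : g), ∀ u ∈ U, ρ X u ∈ U) → U = ⊥ ∨ U = ⊤) :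
    ∀ I : Submodule ℝ (g × V),
      -- I is homogeneous: I = (I ∩ 𝔤) ⊕ (I ∩ V)
      (∀ p ∈ I, (p.1, (0 : V)) ∈ I ∧ ((0 : g), p.2) ∈ I) →
      -- I is a Lie ideal of 𝔨
      (∀ a : g × V, ∀ b ∈ I, kBracket ρ D a b ∈ I) →
      I = ⊥ ∨ I = ⊤ :=
  lts_irreducible_implies_graded_simple_general B ρ hfaithful ip hippos D hD hirr
end

section
/- Assume V is irreducible as a 𝔤-module. Then either the only Lie ideals of 𝔨 = 𝔤 ⊕ V are 0 and 𝔨, or there exists a 𝔤-equivariant linear isomorphism φ : V → 𝔤 (where 𝔤 carries its adjoint representation) and 𝔤 has no Lie ideals other than 0 and 𝔤. (This is the strengthened implication (1)⟹(3)′ of Theorem 3.1.) -/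
/-!
Let `I` be a proper nonzero ideal of `𝔨 = 𝔤 ⊕ V`. Its intersection with `V` is a `𝔤`-submodule.
If it is all of `V`, then `I` contains every `D(v, w) = [v, w]`; these span `𝔤`, because a vector
`B`-orthogonal to all of them acts by zero on `V` (positivity of `⟨-,-⟩`), hence is zero
(faithfulness). So `I ∩ V = 0`, and then also `I ∩ 𝔤 = 0`, since `[X, v] = X·v`. Hence `I` is the
graph of a linear map `ψ` over its projection to `V`, which is a nonzero submodule, hence all of `V`.
Bracketing the graph with `𝔤` shows that `ψ` is equivariant; it is injective since `I ∩ V = 0`, and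
its range contains every `D(w, v)` (bracket `(0, w)` with `(ψ v, v)`), so it is onto. Ideals of `𝔤`
then correspond to submodules of the irreducible module `V`.
-/

variable {g V : Type*} [LieRing g] [LieAlgebra ℝ g] [AddCommGroup V] [Module ℝ V]

attribute [local instance 100] LieRing.ofAssociativeRing

open Function

theorem Submodule.eq_top_of_forall_apply_eq_zero {K M N : Type*} [Field K] [AddCommGroup M]
    [Module K M] [AddCommGroup N] [Module K N] [FiniteDimensional K N]
    {B : M →ₗ[K] N →ₗ[K] K} (hB : Injective B) {S : Submodule K M}
    (hS : ∀ y : N, (∀ x ∈ S, B x y = 0) → y = 0) : S = ⊤ := by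
  by_contra hne
  obtain ⟨f, hf, hfS⟩ := S.exists_dual_map_eq_bot_of_lt_top (lt_top_iff_ne_top.2 hne) inferInstance
  obtain ⟨y, rfl⟩ := (LinearMap.flip_surjective_iff₂.2 hB) f
  refine hf ?_
  rw [hS y fun x hx => (Submodule.eq_bot_iff _).1 hfS _ (Submodule.mem_map_of_mem hx), map_zero]

theorem Submodule.exists_linearMap_mem_iff_eq {R M N : Type*} [Ring R] [AddCommGroup M]
    [Module R M] [AddCommGroup N] [Module R N] (I : Submodule R (M × N))
    (hfst : ∀ x : M, (x, 0) ∈ I → x = 0) (hsnd : I.map (LinearMap.snd R M N) = ⊤) :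
    ∃ ψ : N →ₗ[R] M, ∀ x v, (x, v) ∈ I ↔ x = ψ v := by
  set s := (LinearMap.snd R M N).comp I.subtype
  have hs_inj : Injective s := by
    rw [injective_iff_map_eq_zero]
    rintro ⟨⟨x, v⟩, hxv⟩ (rfl : v = 0)
    simp [hfst x hxv]
  have hs_surj : Surjective s := fun v => by
    obtain ⟨p, hp, rfl⟩ := Submodule.eq_top_iff'.1 hsnd v
    exact ⟨⟨p, hp⟩, rfl⟩
  set e := LinearEquiv.ofBijective s ⟨hs_inj, hs_surj⟩
  refine ⟨(LinearMap.fst R M N).comp (I.subtype.comp e.symm.toLinearMap), fun x v => ⟨?_, ?_⟩⟩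
  · intro hxv
    have : e.symm v = ⟨(x, v), hxv⟩ := e.symm_apply_eq.2 rfl
    simp [this]
  · rintro rfl
    have hgraph : ((e.symm v : I) : M × N) = (_, v) := Prod.ext rfl (e.apply_symm_apply v)
    exact hgraph ▸ (e.symm v).2

theorem Submodule.eq_bot_of_map_snd_eq_bot {R M N : Type*} [Ring R] [AddCommGroup M]
    [Module R M] [AddCommGroup N] [Module R N] {I : Submodule R (M × N)}
    (hfst : ∀ x : M, (x, 0) ∈ I → x = 0) (hsnd : I.map (LinearMap.snd R M N) = ⊥) : I = ⊥ := by
  refine (Submodule.eq_bot_iff I).2 fun ⟨x, v⟩ hxv => ?_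
  obtain rfl : v = 0 := (Submodule.eq_bot_iff _).1 hsnd _ (Submodule.mem_map_of_mem hxv)
  simp [hfst x hxv]

variable {ρ : g →ₗ⁅ℝ⁆ Module.End ℝ V} {D : V →ₗ[ℝ] V →ₗ[ℝ] g}

theorem eq_top_of_forall_D_mem [FiniteDimensional ℝ g] {B : g →ₗ[ℝ] g →ₗ[ℝ] ℝ}
    (hB : Injective B) (hfaithful : Injective ρ) {ip : V →ₗ[ℝ] V →ₗ[ℝ] ℝ}
    (hippos : ∀ v : V, v ≠ 0 → 0 < ip v v) (hD : ∀ (v w : V) (X : g), B (D v w) X = ip (ρ X v) w)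
    (S : Submodule ℝ g) (hS : ∀ v w : V, D v w ∈ S) : S = ⊤ := by
  refine S.eq_top_of_forall_apply_eq_zero hB fun X hX => hfaithful ?_
  ext v
  rw [map_zero, LinearMap.zero_apply]
  by_contra hXv
  have hpos := hippos _ hXv
  rw [← hD, hX _ (hS _ _)] at hpos
  exact hpos.false

variable (ρ D) in
def IsKIdeal (I : Submodule ℝ (g × V)) : Prop :=
  ∀ a : g × V, ∀ b ∈ I, kBracket ρ D a b ∈ I

namespace IsKIdeal

variable {I : Submodule ℝ (g × V)} (hI : IsKIdeal ρ D I)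
include hI

theorem comap_inr_invariant :
    ∀ X : g, ∀ v ∈ I.comap (LinearMap.inr ℝ g V), ρ X v ∈ I.comap (LinearMap.inr ℝ g V) :=
  fun X v hv => by simpa [kBracket] using hI (X, 0) _ hv

theorem map_snd_invariant :
    ∀ X : g, ∀ v ∈ I.map (LinearMap.snd ℝ g V), ρ X v ∈ I.map (LinearMap.snd ℝ g V) := by
  rintro X _ ⟨p, hp, rfl⟩
  exact ⟨_, hI (X, 0) p hp, by simp [kBracket]⟩

theorem eq_top_of_comap_inr_eq_top (hspan : ∀ S : Submodule ℝ g, (∀ v w, D v w ∈ S) → S = ⊤)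
    (htop : I.comap (LinearMap.inr ℝ g V) = ⊤) : I = ⊤ := by
  have hV : ∀ v : V, ((0 : g), v) ∈ I := Submodule.eq_top_iff'.1 htop
  have hg : I.comap (LinearMap.inl ℝ g V) = ⊤ :=
    hspan _ fun w v => by simpa [kBracket] using hI (0, w) _ (hV v)
  refine Submodule.eq_top_iff'.2 fun ⟨X, v⟩ => ?_
  simpa using I.add_mem (Submodule.eq_top_iff'.1 hg X) (hV v)

theorem fst_eq_zero_of_comap_inr_eq_bot (hfaithful : Injective ρ)
    (hbot : I.comap (LinearMap.inr ℝ g V) = ⊥) (X : g) (hX : (X, (0 : V)) ∈ I) : X = 0 := by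
  refine hfaithful (LinearMap.ext fun w => ?_)
  have hXw : ((0 : g), -(ρ X w)) ∈ I := by
    simpa only [kBracket, zero_lie, LinearMap.zero_apply, map_zero, add_zero, zero_sub]
      using hI (0, w) _ hX
  rw [map_zero, LinearMap.zero_apply]
  exact neg_eq_zero.1 ((Submodule.eq_bot_iff _).1 hbot (-(ρ X w)) hXw)

theorem exists_equivariant_equiv (hspan : ∀ S : Submodule ℝ g, (∀ v w, D v w ∈ S) → S = ⊤)
    (hfst : ∀ X : g, (X, (0 : V)) ∈ I → X = 0) (hbot : I.comap (LinearMap.inr ℝ g V) = ⊥)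
    (htop : I.map (LinearMap.snd ℝ g V) = ⊤) :
    ∃ φ : V ≃ₗ[ℝ] g, ∀ (X : g) (v : V), φ (ρ X v) = ⁅X, φ v⁆ := by
  obtain ⟨ψ, hψ⟩ := I.exists_linearMap_mem_iff_eq hfst htop
  have hgraph : ∀ v, (ψ v, v) ∈ I := fun v => (hψ _ _).2 rfl
  have hequiv : ∀ X v, ψ (ρ X v) = ⁅X, ψ v⁆ := fun X v =>
    ((hψ _ _).1 (by simpa [kBracket] using hI (X, 0) _ (hgraph v))).symm
  have hinj : Injective ψ := by
    refine (injective_iff_map_eq_zero ψ).2 fun v hv => ?_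
    have hv' : v ∈ I.comap (LinearMap.inr ℝ g V) := by simpa [hv] using hgraph v
    simpa [hbot] using hv'
  have hsurj : Surjective ψ := by
    refine LinearMap.range_eq_top.1 (hspan _ fun w v => ⟨-(ρ (ψ v) w), ?_⟩)
    have hDwv := hI (0, w) _ (hgraph v)
    simp only [kBracket, map_zero, zero_lie, zero_add, LinearMap.zero_apply, zero_sub] at hDwv
    exact ((hψ _ _).1 hDwv).symm
  exact ⟨LinearEquiv.ofBijective ψ ⟨hinj, hsurj⟩, hequiv⟩

end IsKIdeal

theorem lieIdeal_eq_bot_or_eq_top_of_equivariant_equiv (φ : V ≃ₗ[ℝ] g)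
    (hφ : ∀ (X : g) (v : V), φ (ρ X v) = ⁅X, φ v⁆)
    (hirr : ∀ U : Submodule ℝ V, (∀ (X : g), ∀ u ∈ U, ρ X u ∈ U) → U = ⊥ ∨ U = ⊤)
    (J : Submodule ℝ g) (hJ : ∀ X : g, ∀ Y ∈ J, ⁅X, Y⁆ ∈ J) : J = ⊥ ∨ J = ⊤ := by
  have hJφ : J = (J.comap φ.toLinearMap).map φ.toLinearMap :=
    (Submodule.map_comap_eq_of_surjective φ.surjective J).symm
  rcases hirr (J.comap φ.toLinearMap) fun X u hu => by simpa [hφ] using hJ X _ hu with h | h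
  · exact .inl (by rw [hJφ, h, Submodule.map_bot])
  · exact .inr (by rw [hJφ, h, Submodule.map_top, LinearEquiv.range])

theorem lts_irreducible_implies_simple_or_adjoint_general
    [FiniteDimensional ℝ g]
    -- the ad-invariant nondegenerate symmetric bilinear form on 𝔤
    (B : g →ₗ[ℝ] g →ₗ[ℝ] ℝ)
    (hBnondeg : ∀ X : g, (∀ Y : g, B X Y = 0) → X = 0)
    -- the faithful representation of 𝔤 on V
    (ρ : g →ₗ⁅ℝ⁆ Module.End ℝ V)
    (hfaithful : Function.Injective ρ)
    -- the 𝔤-invariant positive-definite symmetric bilinear form on V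
    (ip : V →ₗ[ℝ] V →ₗ[ℝ] ℝ)
    (hippos : ∀ v : V, v ≠ 0 → 0 < ip v v)
    -- the Faulkner map D, defined by transposing the 𝔤-action
    (D : V →ₗ[ℝ] V →ₗ[ℝ] g)
    (hD : ∀ (v w : V) (X : g), B (D v w) X = ip (ρ X v) w)
    -- V is irreducible as a 𝔤-module
    (hirr : ∀ U : Submodule ℝ V, (∀ (X : g), ∀ u ∈ U, ρ X u ∈ U) → U = ⊥ ∨ U = ⊤) :
    -- either 𝔨 has no proper Lie ideals
      (∀ I : Submodule ℝ (g × V), (∀ a : g × V, ∀ b ∈ I, kBracket ρ D a b ∈ I) → I = ⊥ ∨ I = ⊤) ∨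
      -- or V ≅ 𝔤 as 𝔤-modules (𝔤 with its adjoint representation) and 𝔤 has no proper Lie ideals
      (∃ φ : V ≃ₗ[ℝ] g, (∀ (X : g) (v : V), φ (ρ X v) = ⁅X, φ v⁆) ∧
        (∀ I : Submodule ℝ g, (∀ X : g, ∀ Y ∈ I, ⁅X, Y⁆ ∈ I) → I = ⊥ ∨ I = ⊤)) := by
  refine or_iff_not_imp_left.2 fun hsimple => ?_
  push Not at hsimple
  obtain ⟨I, hI, hIbot, hItop⟩ := hsimple
  replace hI : IsKIdeal ρ D I := hI
  have hB : Injective B := (injective_iff_map_eq_zero B).2 fun X hX =>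
    hBnondeg X fun Y => by simp [hX]
  have hspan := eq_top_of_forall_D_mem hB hfaithful hippos hD
  have hbot : I.comap (LinearMap.inr ℝ g V) = ⊥ :=
    (hirr _ hI.comap_inr_invariant).resolve_right fun h =>
      hItop (hI.eq_top_of_comap_inr_eq_top hspan h)
  have hfst := hI.fst_eq_zero_of_comap_inr_eq_bot hfaithful hbot
  have htop : I.map (LinearMap.snd ℝ g V) = ⊤ :=
    (hirr _ hI.map_snd_invariant).resolve_left fun h =>
      hIbot (Submodule.eq_bot_of_map_snd_eq_bot hfst h)
  obtain ⟨φ, hφ⟩ := hI.exists_equivariant_equiv hspan hfst hbot htop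
  exact ⟨φ, hφ, lieIdeal_eq_bot_or_eq_top_of_equivariant_equiv φ hφ hirr⟩

/-- If V is irreducible as a 𝔤-module, then either the only Lie ideals of 𝔨 = 𝔤 ⊕ V are 0 and 𝔨, or V ≅ 𝔤 equivariantly and 𝔤 has no Lie ideals other than 0 and 𝔤.  (Strengthened implication (1) ⟹ (3)' of Theorem 3.1.) -/
theorem lts_irreducible_implies_simple_or_adjoint
    [FiniteDimensional ℝ g] [FiniteDimensional ℝ V]
    -- the ad-invariant nondegenerate symmetric bilinear form on 𝔤
    (B : g →ₗ[ℝ] g →ₗ[ℝ] ℝ)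
    (hBsymm : ∀ X Y : g, B X Y = B Y X)
    (hBnondeg : ∀ X : g, (∀ Y : g, B X Y = 0) → X = 0)
    (hBinv : ∀ X Y Z : g, B ⁅X, Y⁆ Z + B Y ⁅X, Z⁆ = 0)
    -- the faithful representation of 𝔤 on V
    (ρ : g →ₗ⁅ℝ⁆ Module.End ℝ V)
    (hfaithful : Function.Injective ρ)
    -- the 𝔤-invariant positive-definite symmetric bilinear form on V
    (ip : V →ₗ[ℝ] V →ₗ[ℝ] ℝ)
    (hipsymm : ∀ v w : V, ip v w = ip w v)
    (hippos : ∀ v : V, v ≠ 0 → 0 < ip v v)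
    (hipinv : ∀ (X : g) (v w : V), ip (ρ X v) w + ip v (ρ X w) = 0)
    -- the Faulkner map D, defined by transposing the 𝔤-action
    (D : V →ₗ[ℝ] V →ₗ[ℝ] g)
    (hD : ∀ (v w : V) (X : g), B (D v w) X = ip (ρ X v) w)
    -- cyclicity: [x,y,z] + [y,z,x] + [z,x,y] = 0 (Lie triple system condition)
    (hcyc : ∀ x y z : V, ρ (D x y) z + ρ (D y z) x + ρ (D z x) y = 0)
    -- V is irreducible as a 𝔤-module
    (hirr : ∀ U : Submodule ℝ V, (∀ (X : g), ∀ u ∈ U, ρ X u ∈ U) → U = ⊥ ∨ U = ⊤) :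
    -- either 𝔨 has no proper Lie ideals
      (∀ I : Submodule ℝ (g × V), (∀ a : g × V, ∀ b ∈ I, kBracket ρ D a b ∈ I) → I = ⊥ ∨ I = ⊤) ∨
      -- or V ≅ 𝔤 as 𝔤-modules (𝔤 with its adjoint representation) and 𝔤 has no proper Lie ideals
      (∃ φ : V ≃ₗ[ℝ] g, (∀ (X : g) (v : V), φ (ρ X v) = ⁅X, φ v⁆) ∧
        (∀ I : Submodule ℝ g, (∀ X : g, ∀ Y ∈ I, ⁅X, Y⁆ ∈ I) → I = ⊥ ∨ I = ⊤)) :=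
  lts_irreducible_implies_simple_or_adjoint_general B hBnondeg ρ hfaithful ip hippos D hD hirr
end

section
/- Let U ⊆ V be a complex subspace such that [u,x;y] ∈ U for all u ∈ U and x,y ∈ V, and let U^⊥ be its orthogonal complement with respect to h. Then for all z ∈ V, u ∈ U and v ∈ U^⊥ one has [z,u;v] = 0 and [z,v;u] = 0; consequently both U and U^⊥ are ideals of the N=6 triple system and V decomposes as their perpendicular direct sum, with [x,y;z] ∈ U whenever x,y,z ∈ U and [x,y;z] ∈ U^⊥ whenever x,y,z ∈ U^⊥. -/
/-!
A vector orthogonal to itself vanishes, so a bracket `[z,a;b]` is zero as soon as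
`h([z,a;b],[z,a;b]) = 0`. Moving the bracket across `h` by symmetry (resp. unitarity and hermitian
symmetry) turns this into `h(u', v)` with `u' = [u,z;[z,u;v]] ∈ U` (resp. `[u,[z,v;u];z] ∈ U`) and
`v ⊥ U`, so the mixed brackets `[z,u;v]` and `[z,v;u]` vanish. With the orthogonal decomposition
`V = U ⊕ U^⊥` and skewsymmetry this gives `[x,y;u] ∈ U` for `u ∈ U`; the ideal properties of `U^⊥`
then follow by moving brackets across `h` once more.
-/

open ComplexConjugate

def orthogonalCompl {𝕜 V : Type*} [Zero 𝕜] (h : V → V → 𝕜) (U : Set V) : Set V :=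
  {v | ∀ u ∈ U, h u v = 0}

section TripleBracket

variable {𝕜 V : Type*} [RCLike 𝕜] (h : V → V → 𝕜) (T : V → V → V → V) {U : Set V}

theorem bracket_mem_orthogonalCompl_of_mem_left
    (hunit : ∀ x v w y : V, h (T x v w) y = h x (T y w v))
    (hU : ∀ u ∈ U, ∀ x y : V, T u x y ∈ U) {v : V} (hv : v ∈ orthogonalCompl h U) (x y : V) :
    T v x y ∈ orthogonalCompl h U := by
  intro u hu
  rw [← hunit u y x v]
  exact hv _ (hU u hu y x)

theorem bracket_mem_orthogonalCompl_of_mem_right (hherm : ∀ u v : V, h u v = conj (h v u))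
    (hsym : ∀ x v w y : V, h (T x v w) y = h (T v x y) w)
    (hU : ∀ u ∈ U, ∀ x y : V, T x y u ∈ U) {v : V} (hv : v ∈ orthogonalCompl h U) (x y : V) :
    T x y v ∈ orthogonalCompl h U := by
  intro u hu
  rw [hherm, hsym x y v u, hv _ (hU u hu y x), map_zero]

variable [AddCommGroup V]

theorem bracket_eq_zero_of_mem_of_mem_orthogonalCompl (hdef : ∀ w : V, h w w = 0 → w = 0)
    (hsym : ∀ x v w y : V, h (T x v w) y = h (T v x y) w)
    (hU : ∀ u ∈ U, ∀ x y : V, T u x y ∈ U) {z u v : V} (hu : u ∈ U)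
    (hv : v ∈ orthogonalCompl h U) : T z u v = 0 := by
  apply hdef
  rw [hsym z u v]
  exact hv _ (hU u hu z _)

theorem bracket_eq_zero_of_mem_orthogonalCompl_of_mem (hdef : ∀ w : V, h w w = 0 → w = 0)
    (hherm : ∀ u v : V, h u v = conj (h v u))
    (hsym : ∀ x v w y : V, h (T x v w) y = h (T v x y) w)
    (hunit : ∀ x v w y : V, h (T x v w) y = h x (T y w v))
    (hU : ∀ u ∈ U, ∀ x y : V, T u x y ∈ U) {z u v : V} (hv : v ∈ orthogonalCompl h U)
    (hu : u ∈ U) : T z v u = 0 := by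
  apply hdef
  rw [hsym z v u, hherm, ← hunit u _ z v, hv _ (hU u hu _ z), map_zero]

theorem bracket_mem_of_mem_right
    (hdecomp : ∀ x : V, ∃ p ∈ U, ∃ w ∈ orthogonalCompl h U, x = p + w)
    (hadd : ∀ x x' y z : V, T (x + x') y z = T x y z + T x' y z)
    (hskew : ∀ x y z : V, T x y z = - T y x z)
    (hmixed : ∀ z v u : V, v ∈ orthogonalCompl h U → u ∈ U → T z v u = 0)
    (hU : ∀ u ∈ U, ∀ x y : V, T u x y ∈ U) {u : V} (hu : u ∈ U) (x y : V) : T x y u ∈ U := by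
  obtain ⟨p, hp, w, hw, rfl⟩ := hdecomp x
  rw [hadd, hskew w, hmixed y w u hw hu, neg_zero, add_zero]
  exact hU p hp y u

end TripleBracket

section HermitianForm

variable {𝕜 V : Type*} [RCLike 𝕜] [AddCommGroup V] (h : V → V → 𝕜)

theorem eq_zero_of_self_eq_zero_of_re_pos (hpos : ∀ v : V, v ≠ 0 → 0 < RCLike.re (h v v))
    {w : V} (hw : h w w = 0) : w = 0 := by
  by_contra hne
  simpa [hw] using hpos w hne

variable [Module 𝕜 V]

theorem zero_left_of_linear (hlin : ∀ (a : 𝕜) (u u' v : V), h (a • u + u') v = a * h u v + h u' v)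
    (v : V) : h 0 v = 0 := by
  simpa using hlin 1 0 0 v

/-- Mathlib's inner product is conjugate linear in the first slot, hence the swapped arguments. -/
abbrev innerProductCoreOfHermitian
    (hlin : ∀ (a : 𝕜) (u u' v : V), h (a • u + u') v = a * h u v + h u' v)
    (hherm : ∀ u v : V, h u v = conj (h v u))
    (hpos : ∀ v : V, v ≠ 0 → 0 < RCLike.re (h v v)) : InnerProductSpace.Core 𝕜 V where
  inner x y := h y x
  conj_inner_symm x y := (hherm y x).symm
  re_inner_nonneg x := by
    rcases eq_or_ne x 0 with rfl | hx
    · simp [zero_left_of_linear h hlin]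
    · exact (hpos x hx).le
  add_left x y z := by
    rw [hherm z (x + y), hherm z x, hherm z y, ← map_add]
    simpa using congrArg conj (hlin 1 x y z)
  smul_left x y r := by
    rw [hherm y (r • x), hherm y x, ← map_mul]
    simpa [zero_left_of_linear h hlin] using congrArg conj (hlin r x 0 y)
  definite _ := eq_zero_of_self_eq_zero_of_re_pos h hpos

theorem exists_add_mem_orthogonalCompl [FiniteDimensional 𝕜 V]
    (hlin : ∀ (a : 𝕜) (u u' v : V), h (a • u + u') v = a * h u v + h u' v)
    (hherm : ∀ u v : V, h u v = conj (h v u))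
    (hpos : ∀ v : V, v ≠ 0 → 0 < RCLike.re (h v v)) (U : Submodule 𝕜 V) (v : V) :
    ∃ u ∈ U, ∃ w ∈ orthogonalCompl h U, v = u + w := by
  let c := innerProductCoreOfHermitian h hlin hherm hpos
  let _ : NormedAddCommGroup V := c.toNormedAddCommGroup
  let _ : InnerProductSpace 𝕜 V := InnerProductSpace.ofCore c.toCore
  have : CompleteSpace U := FiniteDimensional.complete 𝕜 U
  obtain ⟨u, hu, w, hw, rfl⟩ := U.exists_add_mem_mem_orthogonal v
  refine ⟨u, hu, w, fun u' hu' => ?_, rfl⟩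
  have hwu' : h w u' = 0 := (U.mem_orthogonal w).mp hw u' hu'
  rw [hherm, hwu', map_zero]

end HermitianForm

theorem n6_submodule_gives_perpendicular_ideal_decomposition_general
    {V : Type*} [AddCommGroup V] [Module ℂ V] [FiniteDimensional ℂ V]
    -- the positive-definite hermitian inner product (linear in the first argument,
    -- antilinear in the second)
    (h : V → V → ℂ)
    (hlin : ∀ (a : ℂ) (u u' v : V), h (a • u + u') v = a * h u v + h u' v)
    (hherm : ∀ u v : V, h u v = (starRingEnd ℂ) (h v u))
    (hpos : ∀ v : V, v ≠ 0 → 0 < (h v v).re)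
    -- the triple bracket [-,-;-], complex linear in its first two arguments and
    -- complex antilinear in its third
    (T : V → V → V → V)
    (hT1 : ∀ (a : ℂ) (x x' y z : V), T (a • x + x') y z = a • T x y z + T x' y z)
    -- unitarity: h([x,v;w],y) = h(x,[y,w;v])
    (hunit : ∀ x v w y : V, h (T x v w) y = h x (T y w v))
    -- symmetry: h([x,v;w],y) = h([v,x;y],w)
    (hsym : ∀ x v w y : V, h (T x v w) y = h (T v x y) w)
    -- skewsymmetry: [x,y;z] = -[y,x;z]
    (hskew : ∀ x y z : V, T x y z = - T y x z)
    -- U is a complex subspace with [u,x;y] ∈ U for all u ∈ U, x, y ∈ V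
    (U : Submodule ℂ V)
    (hU : ∀ u ∈ U, ∀ x y : V, T u x y ∈ U) :
    -- [z,u;v] = 0 and [z,v;u] = 0 for u ∈ U, v ∈ U^⊥
      (∀ z : V, ∀ u ∈ U, ∀ v : V, (∀ u' ∈ U, h u' v = 0) → T z u v = 0 ∧ T z v u = 0) ∧
      -- U is an ideal
      (∀ u ∈ U, ∀ x y : V, T u x y ∈ U ∧ T x y u ∈ U) ∧
      -- U^⊥ is an ideal
      (∀ v : V, (∀ u ∈ U, h u v = 0) → ∀ x y : V,
        (∀ u ∈ U, h u (T v x y) = 0) ∧ (∀ u ∈ U, h u (T x y v) = 0)) ∧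
      -- V = U ⊕ U^⊥ perpendicularly
      (∀ v : V, ∃ u ∈ U, ∃ w : V, (∀ u' ∈ U, h u' w = 0) ∧ v = u + w) ∧
      (∀ v ∈ U, (∀ u ∈ U, h u v = 0) → v = 0) ∧
      -- [x,y;z] ∈ U whenever x,y,z ∈ U
      (∀ x y z : V, x ∈ U → y ∈ U → z ∈ U → T x y z ∈ U) ∧
      -- [x,y;z] ∈ U^⊥ whenever x,y,z ∈ U^⊥
      (∀ x y z : V, (∀ u ∈ U, h u x = 0) → (∀ u ∈ U, h u y = 0) →
        (∀ u ∈ U, h u z = 0) → ∀ u ∈ U, h u (T x y z) = 0) := by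
  have hdef (w : V) : h w w = 0 → w = 0 := eq_zero_of_self_eq_zero_of_re_pos h hpos
  have hdecomp := exists_add_mem_orthogonalCompl h hlin hherm hpos U
  have hadd (x x' y z : V) : T (x + x') y z = T x y z + T x' y z := by
    simpa using hT1 1 x x' y z
  have hmixed (z v u : V) (hv : v ∈ orthogonalCompl h U) (hu : u ∈ U) : T z v u = 0 :=
    bracket_eq_zero_of_mem_orthogonalCompl_of_mem h T hdef hherm hsym hunit hU hv hu
  have hU' (u : V) (hu : u ∈ U) (x y : V) : T x y u ∈ U :=
    bracket_mem_of_mem_right h T hdecomp hadd hskew hmixed hU hu x y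
  have horth_left {v : V} (hv : v ∈ orthogonalCompl h U) (x y : V) :
      T v x y ∈ orthogonalCompl h U :=
    bracket_mem_orthogonalCompl_of_mem_left h T hunit hU hv x y
  refine ⟨fun z u hu v hv =>
      ⟨bracket_eq_zero_of_mem_of_mem_orthogonalCompl h T hdef hsym hU hu hv, hmixed z v u hv hu⟩,
    fun u hu x y => ⟨hU u hu x y, hU' u hu x y⟩,
    fun v hv x y =>
      ⟨horth_left hv x y, bracket_mem_orthogonalCompl_of_mem_right h T hherm hsym hU' hv x y⟩,
    hdecomp, fun v hvU hv => hdef v (hv v hvU), fun x y z hx _ _ => hU x hx y z,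
    fun x y z hx _ _ => horth_left hx y z⟩

/-- If U is a complex subspace of the positive-definite N=6 triple system V with [u,x;y] ∈ U for all u ∈ U and x,y ∈ V, then the mixed brackets between U and U^⊥ vanish, both U and U^⊥ are ideals, and V decomposes as their perpendicular direct sum. -/
theorem n6_submodule_gives_perpendicular_ideal_decomposition
    {V : Type*} [AddCommGroup V] [Module ℂ V] [FiniteDimensional ℂ V]
    -- the positive-definite hermitian inner product (linear in the first argument,
    -- antilinear in the second)
    (h : V → V → ℂ)
    (hlin : ∀ (a : ℂ) (u u' v : V), h (a • u + u') v = a * h u v + h u' v)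
    (hherm : ∀ u v : V, h u v = (starRingEnd ℂ) (h v u))
    (hpos : ∀ v : V, v ≠ 0 → 0 < (h v v).re)
    -- the triple bracket [-,-;-], complex linear in its first two arguments and
    -- complex antilinear in its third
    (T : V → V → V → V)
    (hT1 : ∀ (a : ℂ) (x x' y z : V), T (a • x + x') y z = a • T x y z + T x' y z)
    (hT2 : ∀ (a : ℂ) (x y y' z : V), T x (a • y + y') z = a • T x y z + T x y' z)
    (hT3 : ∀ (a : ℂ) (x y z z' : V),
      T x y (a • z + z') = (starRingEnd ℂ) a • T x y z + T x y z')
    -- unitarity: h([x,v;w],y) = h(x,[y,w;v])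
    (hunit : ∀ x v w y : V, h (T x v w) y = h x (T y w v))
    -- symmetry: h([x,v;w],y) = h([v,x;y],w)
    (hsym : ∀ x v w y : V, h (T x v w) y = h (T v x y) w)
    -- fundamental identity
    (hFI : ∀ z v w x y : V,
      T (T z v w) x y - T (T z x y) v w - T z (T v x y) w + T z v (T w y x) = 0)
    -- skewsymmetry: [x,y;z] = -[y,x;z]
    (hskew : ∀ x y z : V, T x y z = - T y x z)
    -- U is a complex subspace with [u,x;y] ∈ U for all u ∈ U, x, y ∈ V
    (U : Submodule ℂ V)
    (hU : ∀ u ∈ U, ∀ x y : V, T u x y ∈ U) :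
    -- [z,u;v] = 0 and [z,v;u] = 0 for u ∈ U, v ∈ U^⊥
      (∀ z : V, ∀ u ∈ U, ∀ v : V, (∀ u' ∈ U, h u' v = 0) → T z u v = 0 ∧ T z v u = 0) ∧
      -- U is an ideal
      (∀ u ∈ U, ∀ x y : V, T u x y ∈ U ∧ T x y u ∈ U) ∧
      -- U^⊥ is an ideal
      (∀ v : V, (∀ u ∈ U, h u v = 0) → ∀ x y : V,
        (∀ u ∈ U, h u (T v x y) = 0) ∧ (∀ u ∈ U, h u (T x y v) = 0)) ∧
      -- V = U ⊕ U^⊥ perpendicularly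
      (∀ v : V, ∃ u ∈ U, ∃ w : V, (∀ u' ∈ U, h u' w = 0) ∧ v = u + w) ∧
      (∀ v ∈ U, (∀ u ∈ U, h u v = 0) → v = 0) ∧
      -- [x,y;z] ∈ U whenever x,y,z ∈ U
      (∀ x y z : V, x ∈ U → y ∈ U → z ∈ U → T x y z ∈ U) ∧
      -- [x,y;z] ∈ U^⊥ whenever x,y,z ∈ U^⊥
      (∀ x y z : V, (∀ u ∈ U, h u x = 0) → (∀ u ∈ U, h u y = 0) →
        (∀ u ∈ U, h u z = 0) → ∀ u ∈ U, h u (T x y z) = 0) :=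
  n6_submodule_gives_perpendicular_ideal_decomposition_general h hlin hherm hpos T hT1 hunit hsym
    hskew U hU
end

section
/- Let W ⊆ V be a J-stable complex subspace with [x,y,w] ∈ W for all x,y ∈ V and w ∈ W, and let W^⊥ be its orthogonal complement with respect to h. Then [w,x,z] = 0 for all w ∈ W, x ∈ W^⊥ and z ∈ V. -/
/-!
Writing `u = J (J (-u))`, the symmetry axiom gives
`h [w,x,z] u = ω([w,x,z], J(-u)) = ω([z,J(-u),w], x) = h [z,J(-u),w] (J x)`.
Here `[z,J(-u),w] ∈ W`, and `J x ⊥ W` because `W` is `J`-stable, so `[w,x,z]` is orthogonal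
to all of `V` and vanishes by positivity of `h`.
-/

section QuaternionicHermitian

variable {V : Type*} [AddCommGroup V] {h : V → V → ℂ} {J : V → V}

theorem eq_zero_of_forall_h_eq_zero (hpos : ∀ v : V, v ≠ 0 → 0 < (h v v).re) {v : V}
    (hv : ∀ u, h v u = 0) : v = 0 := by
  by_contra hne
  simpa [hv v] using hpos v hne

variable [Module ℂ V]

def hPerp (h : V → V → ℂ) (W : Submodule ℂ V) : Set V :=
  {x | ∀ u ∈ W, h u x = 0}

theorem J_mem_hPerp (hherm : ∀ u v : V, h u v = starRingEnd ℂ (h v u))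
    (hJsq : ∀ v : V, J (J v) = -v) (hJh : ∀ u v : V, h (J u) (J v) = h v u)
    {W : Submodule ℂ V} (hWJ : ∀ w ∈ W, J w ∈ W) {x : V} (hx : x ∈ hPerp h W) :
    J x ∈ hPerp h W := by
  intro m hm
  have hJx : h (J x) m = 0 := by
    simpa [hJsq] using (hJh x (J (-m))).trans (hx _ (hWJ _ (W.neg_mem hm)))
  rw [hherm, hJx, map_zero]

theorem h_bracket_eq_zero {T : V → V → V → V}
    (hsym : ∀ x y z w : V, h (T x y z) (J w) = h (T z w x) (J y))
    (hJsq : ∀ v : V, J (J v) = -v)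
    {W : Submodule ℂ V} (hW : ∀ x y : V, ∀ w ∈ W, T x y w ∈ W)
    {w : V} (hw : w ∈ W) {x : V} (hJx : J x ∈ hPerp h W) (z u : V) :
    h (T w x z) u = 0 := by
  have hs := hsym w x z (J (-u))
  rw [hJsq, neg_neg] at hs
  rw [hs]
  exact hJx _ (hW _ _ _ hw)

end QuaternionicHermitian

theorem quaternionic_alts_perp_bracket_vanishes_general
    {V : Type*} [AddCommGroup V] [Module ℂ V]
    -- the positive-definite hermitian inner product (linear in the first argument,
    -- antilinear in the second)
    (h : V → V → ℂ)
    (hherm : ∀ u v : V, h u v = (starRingEnd ℂ) (h v u))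
    (hpos : ∀ v : V, v ≠ 0 → 0 < (h v v).re)
    -- the quaternionic structure map J; ω(u,v) := h(u, Jv)
    (J : V → V)
    (hJsq : ∀ v : V, J (J v) = -v)
    (hJh : ∀ u v : V, h (J u) (J v) = h v u)
    -- the complex trilinear bracket
    (T : V → V → V → V)
    -- symmetry: ω([x,y,z],w) = ω([z,w,x],y)
    (hsym : ∀ x y z w : V, h (T x y z) (J w) = h (T z w x) (J y))
    -- W is a J-stable complex subspace closed under the bracket in the third slot
    (W : Submodule ℂ V)
    (hWJ : ∀ w ∈ W, J w ∈ W)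
    (hW : ∀ x y : V, ∀ w ∈ W, T x y w ∈ W) :
    ∀ w ∈ W, ∀ x : V, (∀ u ∈ W, h u x = 0) → ∀ z : V, T w x z = 0 := by
  intro w hw x hx z
  have hJx : J x ∈ hPerp h W := J_mem_hPerp hherm hJsq hJh hWJ hx
  exact eq_zero_of_forall_h_eq_zero hpos (h_bracket_eq_zero hsym hJsq hW hw hJx z)

/-- If W is a J-stable subspace of the positive-definite quaternionic anti-Lie triple system V with [x,y,w] ∈ W for all x,y ∈ V, w ∈ W, then [w,x,z] = 0 for all w ∈ W, x ∈ W^⊥ and z ∈ V. -/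
theorem quaternionic_alts_perp_bracket_vanishes
    {V : Type*} [AddCommGroup V] [Module ℂ V] [FiniteDimensional ℂ V]
    -- the positive-definite hermitian inner product (linear in the first argument,
    -- antilinear in the second)
    (h : V → V → ℂ)
    (hlin : ∀ (a : ℂ) (u u' v : V), h (a • u + u') v = a * h u v + h u' v)
    (hherm : ∀ u v : V, h u v = (starRingEnd ℂ) (h v u))
    (hpos : ∀ v : V, v ≠ 0 → 0 < (h v v).re)
    -- the quaternionic structure map J; ω(u,v) := h(u, Jv)
    (J : V → V)
    (hJadd : ∀ u v : V, J (u + v) = J u + J v)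
    (hJsmul : ∀ (a : ℂ) (v : V), J (a • v) = (starRingEnd ℂ) a • J v)
    (hJsq : ∀ v : V, J (J v) = -v)
    (hJh : ∀ u v : V, h (J u) (J v) = h v u)
    -- the complex trilinear bracket
    (T : V → V → V → V)
    (hT1 : ∀ (a : ℂ) (x x' y z : V), T (a • x + x') y z = a • T x y z + T x' y z)
    (hT2 : ∀ (a : ℂ) (x y y' z : V), T x (a • y + y') z = a • T x y z + T x y' z)
    (hT3 : ∀ (a : ℂ) (x y z z' : V), T x y (a • z + z') = a • T x y z + T x y z')
    -- symplecticity: [x,y,z] = [y,x,z]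
    (hsympl : ∀ x y z : V, T x y z = T y x z)
    -- symmetry: ω([x,y,z],w) = ω([z,w,x],y)
    (hsym : ∀ x y z w : V, h (T x y z) (J w) = h (T z w x) (J y))
    -- fundamental identity
    (hFI : ∀ v x w y z : V,
      T v x (T w y z) - T w y (T v x z) - T (T v x w) y z - T w (T v x y) z = 0)
    -- quaternionic condition: J[x,y,z] = [Jx,Jy,Jz]
    (hquat : ∀ x y z : V, J (T x y z) = T (J x) (J y) (J z))
    -- cyclicity (anti-Lie triple system condition)
    (hcyc : ∀ x y z : V, T x y z + T y z x + T z x y = 0)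
    -- W is a J-stable complex subspace closed under the bracket in the third slot
    (W : Submodule ℂ V)
    (hWJ : ∀ w ∈ W, J w ∈ W)
    (hW : ∀ x y : V, ∀ w ∈ W, T x y w ∈ W) :
    ∀ w ∈ W, ∀ x : V, (∀ u ∈ W, h u x = 0) → ∀ z : V, T w x z = 0 :=
  quaternionic_alts_perp_bracket_vanishes_general h hherm hpos J hJsq hJh T hsym W hWJ hW
end
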